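/- The signless Laplacian spectral radius of the graph $K_2 \vee 6K_1$ equals $5 + \sqrt{21}$, and $K_2 \vee 6K_1$ contains no spanning tree with leaf degree at most $2$. -/

import Mathlib

/-- The signless Laplacian matrix `Q(G) = D(G) + A(G)` of a simple graph, over `ℝ`. -/
noncomputable def signlessLap {V : Type*} [Fintype V] [DecidableEq V] (G : SimpleGraph V) :
    Matrix V V ℝ :=
  letI : DecidableRel G.Adj := Classical.decRel _
  G.degMatrix ℝ + G.adjMatrix ℝ

/-- The signless Laplacian spectral radius `q(G)`: the largest eigenvalue of `Q(G)`. -/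
noncomputable def qRadius {V : Type*} [Fintype V] [DecidableEq V] (G : SimpleGraph V) : ℝ :=
  sSup (spectrum ℝ (signlessLap G))

/-- `G` has a spanning tree whose leaf degree is at most `k`, i.e. a spanning tree `T`
in which every vertex is adjacent (in `T`) to at most `k` leaves of `T`. -/
def HasSpanningTreeWithLeafDegLE {V : Type*} (G : SimpleGraph V) (k : ℕ) : Prop :=
  ∃ T : SimpleGraph V, T ≤ G ∧ T.IsTree ∧
    ∀ v : V, {u : V | T.Adj v u ∧ (T.neighborSet u).ncard = 1}.ncard ≤ k

/-- The join `G ∨ H` of two vertex-disjoint graphs: all edges between the two parts. -/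
def SimpleGraph.graphJoin {α β : Type*} (G : SimpleGraph α) (H : SimpleGraph β) :
    SimpleGraph (α ⊕ β) where
  Adj x y :=
    match x, y with
    | Sum.inl a, Sum.inl b => G.Adj a b
    | Sum.inr a, Sum.inr b => H.Adj a b
    | Sum.inl _, Sum.inr _ => True
    | Sum.inr _, Sum.inl _ => True
  symm := ⟨by rintro (a | a) (b | b) h <;> first | trivial | exact G.symm.symm _ _ h | exact H.symm.symm _ _ h⟩
  loopless := ⟨by rintro (a | a) h <;> first | exact G.loopless.irrefl _ h | exact H.loopless.irrefl _ h⟩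

/-- The disjoint union `G ∪ H` of two vertex-disjoint graphs. -/
def SimpleGraph.graphDisjUnion {α β : Type*} (G : SimpleGraph α) (H : SimpleGraph β) :
    SimpleGraph (α ⊕ β) where
  Adj x y :=
    match x, y with
    | Sum.inl a, Sum.inl b => G.Adj a b
    | Sum.inr a, Sum.inr b => H.Adj a b
    | _, _ => False
  symm := ⟨by rintro (a | a) (b | b) h <;> first | trivial | exact G.symm.symm _ _ h | exact H.symm.symm _ _ h⟩
  loopless := ⟨by rintro (a | a) h <;> first | exact G.loopless.irrefl _ h | exact H.loopless.irrefl _ h⟩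

/-!
The signless Laplacian is symmetric with nonnegative entries, so a positive eigenvector
dominates the spectrum: if `Q v = r v` with `v > 0` and `Q u = μ u` with `u ≠ 0`, then
`|μ| |u| ≤ Q |u|` entrywise, and pairing with `v` gives `|μ| ≤ r`. On `K₂ ∨ 6K₁` the vector
equal to `3 + √21` on the clique and `2` on the independent set is such an eigenvector for
`r = 5 + √21`.

If a tree has an independent set `I` with complement `S ≠ ∅`, then every edge meets `I` at most
once, so the degrees on `I` sum to at most `|S| + |I| - 1`. Hence at most `|S| - 1` vertices of
`I` are not leaves, while the leaves in `I` hang on `S`, at most `k` on each vertex. So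
`|I| < (k + 1) |S|`, which fails for `I = 6K₁`, `S = K₂`, `k = 2`.
-/

open Finset Matrix

open Module.End in
theorem Matrix.mem_spectrum_iff_exists_mulVec_eq_smul {K n : Type*} [Field K] [Fintype n]
    [DecidableEq n] {A : Matrix n n K} {μ : K} :
    μ ∈ spectrum K A ↔ ∃ v ≠ 0, A *ᵥ v = μ • v := by
  rw [← spectrum_toLin', ← hasEigenvalue_iff_mem_spectrum]
  constructor
  · intro h
    obtain ⟨v, hv⟩ := h.exists_hasEigenvector
    exact ⟨v, hv.2, by simpa using hv.apply_eq_smul⟩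
  · rintro ⟨v, hv0, hv⟩
    exact hasEigenvalue_of_hasEigenvector ⟨mem_eigenspace_iff.mpr (by simpa using hv), hv0⟩

namespace Matrix.IsSymm

variable {n : Type*} [Fintype n] [DecidableEq n] {A : Matrix n n ℝ} {v : n → ℝ} {r : ℝ}

theorem abs_le_of_mem_spectrum (hA : A.IsSymm) (hA₀ : ∀ i j, 0 ≤ A i j) (hv : ∀ i, 0 < v i)
    (hr : A *ᵥ v = r • v) {μ : ℝ} (hμ : μ ∈ spectrum ℝ A) : |μ| ≤ r := by
  obtain ⟨u, hu0, hu⟩ := mem_spectrum_iff_exists_mulVec_eq_smul.mp hμ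
  set w : n → ℝ := fun i => |u i|
  have hw : |μ| • w ≤ A *ᵥ w := fun i => calc
    |μ| * |u i| = |(A *ᵥ u) i| := by rw [hu, Pi.smul_apply, smul_eq_mul, abs_mul]
    _ ≤ ∑ j, |A i j * u j| := abs_sum_le_sum_abs _ _
    _ = (A *ᵥ w) i := by simp only [abs_mul, abs_of_nonneg (hA₀ i _)]; rfl
  have hvw : 0 < v ⬝ᵥ w := by
    obtain ⟨i, hi⟩ := Function.ne_iff.mp hu0
    exact sum_pos' (fun j _ => mul_nonneg (hv j).le (abs_nonneg _))
      ⟨i, mem_univ _, mul_pos (hv i) (abs_pos.mpr hi)⟩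
  refine le_of_mul_le_mul_right ?_ hvw
  calc |μ| * (v ⬝ᵥ w) = v ⬝ᵥ (|μ| • w) := by rw [dotProduct_smul, smul_eq_mul]
    _ ≤ v ⬝ᵥ (A *ᵥ w) := dotProduct_le_dotProduct_of_nonneg_left hw fun i => (hv i).le
    _ = (A *ᵥ v) ⬝ᵥ w := by rw [dotProduct_mulVec, ← mulVec_transpose, hA.eq]
    _ = r * (v ⬝ᵥ w) := by rw [hr, smul_dotProduct, smul_eq_mul]

theorem sSup_spectrum_eq [Nonempty n] (hA : A.IsSymm) (hA₀ : ∀ i j, 0 ≤ A i j)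
    (hv : ∀ i, 0 < v i) (hr : A *ᵥ v = r • v) : sSup (spectrum ℝ A) = r := by
  have hv0 : v ≠ 0 := fun h => (hv (Classical.arbitrary n)).ne' (congrFun h _)
  refine IsGreatest.csSup_eq ⟨mem_spectrum_iff_exists_mulVec_eq_smul.mpr ⟨v, hv0, hr⟩, ?_⟩
  exact fun μ hμ => (le_abs_self μ).trans (hA.abs_le_of_mem_spectrum hA₀ hv hr hμ)

end Matrix.IsSymm

section signlessLap

variable {V : Type*} [Fintype V] [DecidableEq V]

theorem signlessLap_eq_degMatrix_add_adjMatrix (G : SimpleGraph V) [DecidableRel G.Adj] :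
    signlessLap G = G.degMatrix ℝ + G.adjMatrix ℝ := by
  unfold signlessLap
  congr!

theorem signlessLap_isSymm (G : SimpleGraph V) : (signlessLap G).IsSymm := by
  classical
  rw [signlessLap_eq_degMatrix_add_adjMatrix]
  exact (G.isSymm_degMatrix (R := ℝ)).add G.isSymm_adjMatrix

theorem signlessLap_nonneg (G : SimpleGraph V) (i j : V) : 0 ≤ signlessLap G i j := by
  classical
  rw [signlessLap_eq_degMatrix_add_adjMatrix, Matrix.add_apply, SimpleGraph.degMatrix,
    diagonal_apply, SimpleGraph.adjMatrix_apply]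
  positivity

theorem signlessLap_mulVec_apply (G : SimpleGraph V) [DecidableRel G.Adj] (f : V → ℝ) (v : V) :
    (signlessLap G *ᵥ f) v = ∑ u ∈ G.neighborFinset v, (f v + f u) := by
  rw [signlessLap_eq_degMatrix_add_adjMatrix, add_mulVec, Pi.add_apply,
    SimpleGraph.degMatrix_mulVec_apply, SimpleGraph.adjMatrix_mulVec_apply, sum_add_distrib,
    sum_const, G.card_neighborFinset_eq_degree, nsmul_eq_mul]

theorem qRadius_eq_of_mulVec_eq_smul [Nonempty V] (G : SimpleGraph V) {f : V → ℝ}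
    (hf : ∀ v, 0 < f v) {r : ℝ} (hr : signlessLap G *ᵥ f = r • f) : qRadius G = r :=
  (signlessLap_isSymm G).sSup_spectrum_eq (signlessLap_nonneg G) hf hr

end signlessLap

namespace SimpleGraph

variable {α β : Type*} {G : SimpleGraph α} {H : SimpleGraph β}

@[simp] theorem graphJoin_adj_inl_inl {a b : α} :
    (G.graphJoin H).Adj (.inl a) (.inl b) ↔ G.Adj a b :=
  Iff.rfl

@[simp] theorem graphJoin_adj_inr_inr {a b : β} :
    (G.graphJoin H).Adj (.inr a) (.inr b) ↔ H.Adj a b :=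
  Iff.rfl

@[simp] theorem graphJoin_adj_inl_inr {a : α} {b : β} : (G.graphJoin H).Adj (.inl a) (.inr b) :=
  trivial

@[simp] theorem graphJoin_adj_inr_inl {a : β} {b : α} : (G.graphJoin H).Adj (.inr a) (.inl b) :=
  trivial

theorem graphJoin_bot_isIndepSet_compl_map_inl [Fintype α] [Fintype β] [DecidableEq α]
    [DecidableEq β] (G : SimpleGraph α) :
    (G.graphJoin (⊥ : SimpleGraph β)).IsIndepSet ↑(univ.map (.inl : α ↪ α ⊕ β))ᶜ := by
  rintro (a | a) ha (b | b) hb -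
  · simp at ha
  · simp at ha
  · simp at hb
  · simp

end SimpleGraph

theorem signlessLap_top_graphJoin_bot_mulVec (α β : Type*) [Fintype α] [DecidableEq α]
    [Fintype β] [DecidableEq β] (x y : ℝ) :
    signlessLap ((⊤ : SimpleGraph α).graphJoin (⊥ : SimpleGraph β)) *ᵥ
        Sum.elim (fun _ => x) (fun _ => y) =
      Sum.elim (fun _ => (2 * (Fintype.card α - 1) + Fintype.card β) * x + Fintype.card β * y)
        (fun _ => Fintype.card α * (x + y)) := by
  classical
  funext z
  rw [signlessLap_mulVec_apply, SimpleGraph.neighborFinset_eq_filter, sum_filter,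
    Fintype.sum_sum_type]
  rcases z with a | b
  · simp [ite_not, sum_ite, filter_ne, card_erase_of_mem,
      Nat.cast_sub (Fintype.card_pos_iff.mpr ⟨a⟩)]
    ring
  · simp
    ring

namespace SimpleGraph

variable {V : Type*} [Fintype V] {G : SimpleGraph V} [DecidableRel G.Adj]

theorem ncard_neighborSet_eq_degree (v : V) : (G.neighborSet v).ncard = G.degree v := by
  rw [← card_neighborSet_eq_degree, ← Nat.card_eq_fintype_card, Nat.card_coe_set_eq]

variable [DecidableEq V]

theorem IsIndepSet.sum_degree_le_card_edgeFinset {t : Finset V} (ht : G.IsIndepSet t) :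
    ∑ v ∈ t, G.degree v ≤ #G.edgeFinset := by
  have hdisj : (t : Set V).PairwiseDisjoint (G.incidenceFinset ·) := by
    intro a ha b hb hab
    rw [Function.onFun, ← disjoint_coe, coe_incidenceFinset, coe_incidenceFinset,
      Set.disjoint_iff]
    intro e he
    have hab' : s(a, b) ∈ G.edgeSet := by
      rw [← Set.mem_singleton_iff.mp (G.incidenceSet_inter_incidenceSet_subset hab he)]
      exact he.1.1
    exact ht ha hb hab hab'
  calc ∑ v ∈ t, G.degree v = #(t.biUnion (G.incidenceFinset ·)) := by
        simp only [card_biUnion hdisj, card_incidenceFinset_eq_degree]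
    _ ≤ #G.edgeFinset := card_le_card (biUnion_subset.2 fun v _ => G.incidenceFinset_subset v)

theorem card_filter_degree_eq_one_le_of_isIndepSet_compl {k : ℕ}
    (hk : ∀ v, {u | G.Adj v u ∧ (G.neighborSet u).ncard = 1}.ncard ≤ k) {s : Finset V}
    (hind : G.IsIndepSet ↑sᶜ) : #(sᶜ.filter (G.degree · = 1)) ≤ k * #s := by
  have hsub : sᶜ.filter (G.degree · = 1) ⊆
      s.biUnion fun u => (G.neighborFinset u).filter (G.degree · = 1) := by
    intro v hv
    obtain ⟨hvs, hv1⟩ := mem_filter.mp hv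
    obtain ⟨u, hvu⟩ := (G.degree_pos_iff_exists_adj v).mp (hv1 ▸ Nat.one_pos)
    have hu : u ∈ s := by
      by_contra hu
      exact hind (by simpa using hvs) (by simpa using hu) hvu.ne hvu
    exact mem_biUnion.mpr ⟨u, hu, mem_filter.mpr ⟨(mem_neighborFinset _ _ _).mpr hvu.symm, hv1⟩⟩
  refine (card_le_card hsub).trans <| card_biUnion_le.trans ?_
  rw [mul_comm, ← smul_eq_mul]
  refine sum_le_card_nsmul _ _ _ fun u _ => ?_
  calc #((G.neighborFinset u).filter (G.degree · = 1))
      = {v | G.Adj u v ∧ (G.neighborSet v).ncard = 1}.ncard := by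
        rw [← Set.ncard_coe_finset]
        congr 1
        ext v
        simp [ncard_neighborSet_eq_degree]
    _ ≤ k := hk u

theorem IsTree.card_compl_lt_of_isIndepSet_compl (hG : G.IsTree) {k : ℕ}
    (hk : ∀ v, {u | G.Adj v u ∧ (G.neighborSet u).ncard = 1}.ncard ≤ k) {s : Finset V}
    (hs : s.Nonempty) (hind : G.IsIndepSet ↑sᶜ) : #sᶜ < (k + 1) * #s := by
  have hdeg : ∀ v ∈ sᶜ, 1 ≤ G.degree v := by
    intro v hv
    obtain ⟨u, hu⟩ := hs
    exact (hG.connected.preconnected v u).degree_pos_left (by rintro rfl; simp_all)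
  have hsum : 2 * #sᶜ ≤ ∑ v ∈ sᶜ, G.degree v + #(sᶜ.filter (G.degree · = 1)) := by
    rw [card_filter, ← sum_add_distrib, mul_comm, ← smul_eq_mul, ← sum_const]
    refine sum_le_sum fun v hv => ?_
    have := hdeg v hv
    split_ifs <;> omega
  have hleaves := card_filter_degree_eq_one_le_of_isIndepSet_compl hk hind
  have hedges := hG.card_edgeFinset
  have hV := card_add_card_compl s
  have := hind.sum_degree_le_card_edgeFinset
  linarith

end SimpleGraph

theorem HasSpanningTreeWithLeafDegLE.card_compl_lt {V : Type*} [Fintype V] [DecidableEq V]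
    {G : SimpleGraph V} {k : ℕ} (h : HasSpanningTreeWithLeafDegLE G k) {s : Finset V}
    (hs : s.Nonempty) (hind : G.IsIndepSet ↑sᶜ) : #sᶜ < (k + 1) * #s := by
  classical
  obtain ⟨T, hTG, hT, hk⟩ := h
  exact hT.card_compl_lt_of_isIndepSet_compl hk hs
    fun u hu v hv huv hadj => hind hu hv huv (hTG hadj)

/-- `q(K₂ ∨ 6K₁) = 5 + Real.sqrt 21` and `K₂ ∨ 6K₁` has no spanning tree with leaf degree at
most 2. -/
theorem qRadius_K2_join_6K1 :
    qRadius ((⊤ : SimpleGraph (Fin 2)).graphJoin (⊥ : SimpleGraph (Fin 6))) = 5 + Real.sqrt 21 ∧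
      ¬ HasSpanningTreeWithLeafDegLE ((⊤ : SimpleGraph (Fin 2)).graphJoin (⊥ : SimpleGraph (Fin 6))) 2 := by
  constructor
  · have h21 : Real.sqrt 21 ^ 2 = 21 := Real.sq_sqrt (by norm_num)
    -- `(3 + √21, 2)` is the Perron vector of the quotient matrix `!![8, 6; 2, 2]`.
    refine qRadius_eq_of_mulVec_eq_smul _ (f := Sum.elim (fun _ => 3 + Real.sqrt 21) fun _ => 2)
      (by rintro (_ | _) <;> simp; positivity) ?_
    rw [signlessLap_top_graphJoin_bot_mulVec]
    ext (_ | _) <;> simp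
    · linear_combination -h21
    · ring
  · intro h
    have := h.card_compl_lt (s := univ.map .inl) (by simp)
      (SimpleGraph.graphJoin_bot_isIndepSet_compl_map_inl _)
    simp [card_compl] at this
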